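/- Let c be an immersed closed curve, h a direction, and θ ∈ ℝ. For t near 0 let κ²_t(θ) denote the squared curvature of the curve c + t·h at θ, i.e. κ²_t := |D_s^{(t)}(D_s^{(t)}(c+t·h))|² where D_s^{(t)} u := u'/|(c+t·h)'| is the arc-length derivative of c + t·h. Then t ↦ κ²_t(θ) is differentiable at t = 0 and (d/dt)|_{t=0} κ²_t(θ) = −4⟨D_s h(θ), D_s c(θ)⟩·κ²(θ) + 2⟨D_s²h(θ), D_s²c(θ)⟩. -/

import Mathlib

noncomputable section

open Real

/-- Points of `ℝ³`. -/
abbrev V3 := Fin 3 → ℝ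

/-- Euclidean inner product on `ℝ³`. -/
def dot3 (u v : V3) : ℝ := u 0 * v 0 + u 1 * v 1 + u 2 * v 2

/-- Cross product on `ℝ³`. -/
def cross3 (u v : V3) : V3 :=
  ![u 1 * v 2 - u 2 * v 1, u 2 * v 0 - u 0 * v 2, u 0 * v 1 - u 1 * v 0]

/-- Euclidean norm on `ℝ³`. -/
def norm3 (u : V3) : ℝ := Real.sqrt (dot3 u u)

/-- A closed curve: a smooth `2π`-periodic map `ℝ → ℝ³`. -/
def IsClosedCurve (c : ℝ → V3) : Prop :=
  ContDiff ℝ (⊤ : ℕ∞) c ∧ ∀ θ, c (θ + 2 * π) = c θ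

/-- An immersed closed curve: `c'(θ) ≠ 0` for all `θ`. -/
def IsImmersed (c : ℝ → V3) : Prop :=
  IsClosedCurve c ∧ ∀ θ, deriv c θ ≠ 0

/-- A direction (tangent vector): a smooth `2π`-periodic map `ℝ → ℝ³`. -/
def IsDirection (h : ℝ → V3) : Prop :=
  ContDiff ℝ (⊤ : ℕ∞) h ∧ ∀ θ, h (θ + 2 * π) = h θ

/-- Arc-length derivative along `c`: `D_s h = h'/|c'|`. -/
def Ds (c h : ℝ → V3) : ℝ → V3 := fun θ => (norm3 (deriv c θ))⁻¹ • deriv h θ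

/-- The unit tangent `T = D_s c = c'/|c'|`. -/
def unitT (c : ℝ → V3) : ℝ → V3 := Ds c c

/-- `D_s² c = D_s (D_s c)`. -/
def Ds2c (c : ℝ → V3) : ℝ → V3 := Ds c (Ds c c)

/-- Arc-length integral `∫ f ds = ∫₀^{2π} f(θ) |c'(θ)| dθ`. -/
def arcInt (c : ℝ → V3) (f : ℝ → ℝ) : ℝ :=
  ∫ θ in (0:ℝ)..(2 * π), f θ * norm3 (deriv c θ)

/-- `L²(ds)` pairing `⟨f,g⟩_{L²} = ∫ ⟨f,g⟩ ds`. -/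
def L2 (c f g : ℝ → V3) : ℝ := arcInt c (fun θ => dot3 (f θ) (g θ))

/-- Length `ℓ_c = ∫₀^{2π} |c'(θ)| dθ`. -/
def curveLen (c : ℝ → V3) : ℝ := ∫ θ in (0:ℝ)..(2 * π), norm3 (deriv c θ)

/-- The Liouville one-form for `L = id`: `Θ(c,h) = ∫₀^{2π} ⟨c × c', h⟩ dθ`. -/
def Theta (c h : ℝ → V3) : ℝ :=
  ∫ θ in (0:ℝ)..(2 * π), dot3 (cross3 (c θ) (deriv c θ)) (h θ)

/-- The squared curvature `κ² = |D_s² c|²`. -/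
def kappaSq (c : ℝ → V3) (θ : ℝ) : ℝ := dot3 (Ds2c c θ) (Ds2c c θ)

/- ## Auxiliary lemmas -/

lemma dot3_comm (u v : V3) : dot3 u v = dot3 v u := by unfold dot3; ring

lemma dot3_pos {v : V3} (hv : v ≠ 0) : 0 < dot3 v v := by
  have h : v 0 ≠ 0 ∨ v 1 ≠ 0 ∨ v 2 ≠ 0 := by
    by_contra hcon
    push_neg at hcon
    apply hv
    funext i
    fin_cases i
    · exact hcon.1
    · exact hcon.2.1
    · exact hcon.2.2
  unfold dot3
  rcases h with h|h|h <;>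
    nlinarith [mul_self_pos.mpr h, mul_self_nonneg (v 0), mul_self_nonneg (v 1),
      mul_self_nonneg (v 2)]

lemma dot3_expand (α β γ δ : ℝ) (u v w z : V3) :
    dot3 (α • u + β • v) (γ • w + δ • z) =
      α * γ * dot3 u w + α * δ * dot3 u z + β * γ * dot3 v w + β * δ * dot3 v z := by
  simp only [dot3, Pi.add_apply, Pi.smul_apply, smul_eq_mul]; ring

lemma dot3_smul_smul (r s : ℝ) (u v : V3) :
    dot3 (r • u) (s • v) = r * s * dot3 u v := by
  simp only [dot3, Pi.smul_apply, smul_eq_mul]; ring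

lemma hasDerivAt_dot3 {f g : ℝ → V3} {f' g' : V3} {x : ℝ}
    (hf : HasDerivAt f f' x) (hg : HasDerivAt g g' x) :
    HasDerivAt (fun x => dot3 (f x) (g x)) (dot3 f' (g x) + dot3 (f x) g') x := by
  have h0 := ((hasDerivAt_pi.mp hf) 0).mul ((hasDerivAt_pi.mp hg) 0)
  have h1 := ((hasDerivAt_pi.mp hf) 1).mul ((hasDerivAt_pi.mp hg) 1)
  have h2 := ((hasDerivAt_pi.mp hf) 2).mul ((hasDerivAt_pi.mp hg) 2)
  have H := (h0.add h1).add h2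
  have e : dot3 f' (g x) + dot3 (f x) g' =
      f' 0 * g x 0 + f x 0 * g' 0 + (f' 1 * g x 1 + f x 1 * g' 1) +
        (f' 2 * g x 2 + f x 2 * g' 2) := by unfold dot3; ring
  rw [e]
  exact H

lemma aux_deriv_add_smul (c h : ℝ → V3) (hc : ContDiff ℝ (⊤:ℕ∞) c)
    (hh : ContDiff ℝ (⊤:ℕ∞) h) (t : ℝ) :
    deriv (fun θ' => c θ' + t • h θ') = fun θ' => deriv c θ' + t • deriv h θ' := by
  funext θ'
  exact ((hc.differentiable (by simp) θ').hasDerivAt.add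
    (((hh.differentiable (by simp) θ').hasDerivAt).const_smul t)).deriv

lemma Ds2_eq (c f : ℝ → V3) (hc : ContDiff ℝ (⊤:ℕ∞) c) (hf : ContDiff ℝ (⊤:ℕ∞) f) (θ : ℝ)
    (hpos : 0 < dot3 (deriv c θ) (deriv c θ)) :
    Ds c (Ds c f) θ =
      (-(dot3 (deriv c θ) (deriv (deriv c) θ)) / (dot3 (deriv c θ) (deriv c θ))^2) • deriv f θ
      + (dot3 (deriv c θ) (deriv c θ))⁻¹ • deriv (deriv f) θ := by
  have hc2d : Differentiable ℝ (deriv c) :=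
    ((contDiff_infty_iff_deriv.mp hc).2).differentiable (by simp)
  have hf2d : Differentiable ℝ (deriv f) :=
    ((contDiff_infty_iff_deriv.mp hf).2).differentiable (by simp)
  have hq : dot3 (deriv c θ) (deriv c θ) ≠ 0 := ne_of_gt hpos
  have hN : Real.sqrt (dot3 (deriv c θ) (deriv c θ)) ≠ 0 :=
    (Real.sqrt_pos.mpr hpos).ne'
  have hdotd : HasDerivAt (fun θ' => dot3 (deriv c θ') (deriv c θ'))
      (dot3 (deriv (deriv c) θ) (deriv c θ) + dot3 (deriv c θ) (deriv (deriv c) θ)) θ :=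
    hasDerivAt_dot3 (hc2d θ).hasDerivAt (hc2d θ).hasDerivAt
  have hNd : HasDerivAt (fun θ' => norm3 (deriv c θ'))
      (1 / (2 * Real.sqrt (dot3 (deriv c θ) (deriv c θ))) *
        (dot3 (deriv (deriv c) θ) (deriv c θ) + dot3 (deriv c θ) (deriv (deriv c) θ))) θ := by
    have := (Real.hasDerivAt_sqrt hq).comp θ hdotd
    exact this
  have hNA : norm3 (deriv c θ) = Real.sqrt (dot3 (deriv c θ) (deriv c θ)) := rfl
  have hinv := hNd.inv (by rw [hNA]; exact hN)
  have hsm := hinv.smul (hf2d θ).hasDerivAt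
  have hDs : Ds c (Ds c f) θ
      = (norm3 (deriv c θ))⁻¹ • deriv (fun θ' => (norm3 (deriv c θ'))⁻¹ • deriv f θ') θ := rfl
  rw [hDs, (show HasDerivAt (fun θ' => (norm3 (deriv c θ'))⁻¹ • deriv f θ') ((norm3 (deriv c θ))⁻¹ • deriv (deriv f) θ + _) θ from hsm).deriv, smul_add, smul_smul, smul_smul, add_comm]
  have hNN : Real.sqrt (dot3 (deriv c θ) (deriv c θ)) * Real.sqrt (dot3 (deriv c θ) (deriv c θ))
      = dot3 (deriv c θ) (deriv c θ) := Real.mul_self_sqrt hpos.le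
  congr 1
  · congr 1
    rw [hNA, dot3_comm (deriv (deriv c) θ) (deriv c θ)]
    field_simp
    linear_combination (2 * dot3 (deriv c θ) (deriv (deriv c) θ) * (Real.sqrt (dot3 (deriv c θ) (deriv c θ)) ^ 2 + dot3 (deriv c θ) (deriv c θ))) * hNN
  · congr 1
    rw [hNA, ← mul_inv, hNN]

lemma kappaSq_eq (c : ℝ → V3) (hc : ContDiff ℝ (⊤:ℕ∞) c) (θ : ℝ)
    (hpos : 0 < dot3 (deriv c θ) (deriv c θ)) :
    kappaSq c θ =
      dot3 (deriv (deriv c) θ) (deriv (deriv c) θ) / (dot3 (deriv c θ) (deriv c θ))^2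
      - (dot3 (deriv c θ) (deriv (deriv c) θ))^2 / (dot3 (deriv c θ) (deriv c θ))^3 := by
  have h2 := Ds2_eq c c hc hc θ hpos
  have hd : Ds2c c θ = Ds c (Ds c c) θ := rfl
  unfold kappaSq
  rw [hd, h2, dot3_expand, dot3_comm (deriv (deriv c) θ) (deriv c θ)]
  have hq : dot3 (deriv c θ) (deriv c θ) ≠ 0 := ne_of_gt hpos
  field_simp
  ring

/-- the pointwise variation of the squared curvature:
`(d/dt)|₀ κ²_{c+th}(θ) = −4⟨D_s h, D_s c⟩κ² + 2⟨D_s²h, D_s²c⟩`. -/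
theorem squared_curvature_variation (c h : ℝ → V3) (θ : ℝ)
    (hc : IsImmersed c) (hh : IsDirection h) :
    HasDerivAt (fun t : ℝ => kappaSq (fun θ' => c θ' + t • h θ') θ)
      (-4 * dot3 (Ds c h θ) (Ds c c θ) * kappaSq c θ
        + 2 * dot3 (Ds c (Ds c h) θ) (Ds2c c θ)) 0 := by
  obtain ⟨⟨hcs0, _⟩, hci⟩ := hc
  obtain ⟨hhs0, _⟩ := hh
  have hcs : ContDiff ℝ (⊤:ℕ∞) c := hcs0.of_le (by simp)
  have hhs : ContDiff ℝ (⊤:ℕ∞) h := hhs0.of_le (by simp)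
  have hcs2 : ContDiff ℝ (⊤:ℕ∞) (deriv c) := (contDiff_infty_iff_deriv.mp hcs).2
  have hhs2 : ContDiff ℝ (⊤:ℕ∞) (deriv h) := (contDiff_infty_iff_deriv.mp hhs).2
  have hq0 : 0 < dot3 (deriv c θ) (deriv c θ) := dot3_pos (hci θ)
  have hlin : ∀ (X Y : V3), HasDerivAt (fun t : ℝ => X + t • Y) Y 0 := by
    intro X Y
    have h1 : HasDerivAt (fun t : ℝ => t • Y) ((1:ℝ) • Y) 0 := (hasDerivAt_id 0).smul_const Y
    simpa using h1.const_add X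
  have hQ : HasDerivAt
      (fun t : ℝ => dot3 (deriv c θ + t • deriv h θ) (deriv c θ + t • deriv h θ))
      (2 * dot3 (deriv c θ) (deriv h θ)) 0 := by
    have := hasDerivAt_dot3 (hlin (deriv c θ) (deriv h θ)) (hlin (deriv c θ) (deriv h θ))
    convert this using 1
    simp only [zero_smul, add_zero]
    rw [dot3_comm (deriv h θ) (deriv c θ)]; ring
  have hD1 : HasDerivAt
      (fun t : ℝ => dot3 (deriv c θ + t • deriv h θ)
        (deriv (deriv c) θ + t • deriv (deriv h) θ))
      (dot3 (deriv h θ) (deriv (deriv c) θ) + dot3 (deriv c θ) (deriv (deriv h) θ)) 0 := by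
    have := hasDerivAt_dot3 (hlin (deriv c θ) (deriv h θ))
      (hlin (deriv (deriv c) θ) (deriv (deriv h) θ))
    convert this using 1
    simp only [zero_smul, add_zero]
  have hD2 : HasDerivAt
      (fun t : ℝ => dot3 (deriv (deriv c) θ + t • deriv (deriv h) θ)
        (deriv (deriv c) θ + t • deriv (deriv h) θ))
      (2 * dot3 (deriv (deriv c) θ) (deriv (deriv h) θ)) 0 := by
    have := hasDerivAt_dot3 (hlin (deriv (deriv c) θ) (deriv (deriv h) θ))
      (hlin (deriv (deriv c) θ) (deriv (deriv h) θ))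
    convert this using 1
    simp only [zero_smul, add_zero]
    rw [dot3_comm (deriv (deriv h) θ) (deriv (deriv c) θ)]; ring
  have hP := (hD2.div (hQ.pow 2)
      (by simp only [Pi.pow_apply, zero_smul, add_zero]; exact pow_ne_zero _ hq0.ne')).sub
    ((hD1.pow 2).div (hQ.pow 3)
      (by simp only [Pi.pow_apply, zero_smul, add_zero]; exact pow_ne_zero _ hq0.ne'))
  have hdca : ∀ t : ℝ, deriv (fun θ' => c θ' + t • h θ')
      = fun θ' => deriv c θ' + t • deriv h θ' :=
    fun t => aux_deriv_add_smul c h hcs hhs t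
  have hdca2 : ∀ t : ℝ, deriv (deriv (fun θ' => c θ' + t • h θ'))
      = fun θ' => deriv (deriv c) θ' + t • deriv (deriv h) θ' := by
    intro t
    rw [hdca t]
    exact aux_deriv_add_smul _ _ hcs2 hhs2 t
  have hev : ∀ᶠ t in nhds (0:ℝ),
      0 < dot3 (deriv c θ + t • deriv h θ) (deriv c θ + t • deriv h θ) := by
    have hc0 : ContinuousAt
        (fun t : ℝ => dot3 (deriv c θ + t • deriv h θ) (deriv c θ + t • deriv h θ)) 0 :=
      hQ.continuousAt
    have hmem : Set.Ioi (0:ℝ) ∈ nhds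
        (dot3 (deriv c θ + (0:ℝ) • deriv h θ) (deriv c θ + (0:ℝ) • deriv h θ)) := by
      simp only [zero_smul, add_zero]
      exact Ioi_mem_nhds hq0
    filter_upwards [hc0.preimage_mem_nhds hmem] with t ht using ht
  have heq : (fun t : ℝ => kappaSq (fun θ' => c θ' + t • h θ') θ) =ᶠ[nhds 0]
      (fun t : ℝ =>
        dot3 (deriv (deriv c) θ + t • deriv (deriv h) θ)
            (deriv (deriv c) θ + t • deriv (deriv h) θ)
          / (dot3 (deriv c θ + t • deriv h θ) (deriv c θ + t • deriv h θ))^2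
        - (dot3 (deriv c θ + t • deriv h θ) (deriv (deriv c) θ + t • deriv (deriv h) θ))^2
          / (dot3 (deriv c θ + t • deriv h θ) (deriv c θ + t • deriv h θ))^3) := by
    filter_upwards [hev] with t ht
    have hct : ContDiff ℝ (⊤:ℕ∞) (fun θ' => c θ' + t • h θ') := hcs.add (hhs.const_smul t)
    have hp : 0 < dot3 (deriv (fun θ' => c θ' + t • h θ') θ)
        (deriv (fun θ' => c θ' + t • h θ') θ) := by
      simp only [hdca t]; exact ht
    have hk := kappaSq_eq _ hct θ hp
    rw [hk]
    simp only [hdca t, hdca2 t, aux_deriv_add_smul (deriv c) (deriv h) hcs2 hhs2 t]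
  have hfinal := hP.congr_of_eventuallyEq heq
  refine hfinal.congr_deriv ?_
  have hDh := Ds2_eq c h hcs hhs θ hq0
  have hDc := Ds2_eq c c hcs hcs θ hq0
  have hk0 := kappaSq_eq c hcs θ hq0
  have hDsH : Ds c h θ = (norm3 (deriv c θ))⁻¹ • deriv h θ := rfl
  have hDsC : Ds c c θ = (norm3 (deriv c θ))⁻¹ • deriv c θ := rfl
  have hDs2c : Ds2c c θ = Ds c (Ds c c) θ := rfl
  have hNN : (norm3 (deriv c θ))⁻¹ * (norm3 (deriv c θ))⁻¹
      = (dot3 (deriv c θ) (deriv c θ))⁻¹ := by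
    rw [← mul_inv]
    congr 1
    exact Real.mul_self_sqrt hq0.le
  rw [hk0, hDs2c, hDc, hDh, hDsH, hDsC, dot3_smul_smul, hNN, dot3_expand]
  simp only [Pi.pow_apply, zero_smul, add_zero]
  rw [dot3_comm (deriv h θ) (deriv c θ), dot3_comm (deriv (deriv h) θ) (deriv c θ),
      dot3_comm (deriv (deriv h) θ) (deriv (deriv c) θ)]
  have hq : dot3 (deriv c θ) (deriv c θ) ≠ 0 := hq0.ne'
  push_cast
  field_simp
  ring
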